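/- arXiv:2202.09800 — 4 statements merged into one kernel-verified Lean document; each statement's English description precedes it below -/
import Mathlib

section
/- Let Ω ⊆ ℂ be a nonempty open set, let X : Ω → ℝ⁴ be a C² map, and let Ψ, f₁, f₂ : Ω → ℂ be C¹ functions such that X_z = Ψ·(f₁ + f₂, −i·(f₁ − f₂), 1 − f₁f₂, 1 + f₁f₂) componentwise on Ω. Then at every point of Ω: (1) Ψ_z̄ = conj(Ψ_z̄), i.e. Ψ_z̄ is real; (2) (Ψ·f₁·f₂)_z̄ = conj((Ψ·f₁·f₂)_z̄), i.e. (Ψ·f₁·f₂)_z̄ is real; (3) (Ψ·f₁)_z̄ = conj((Ψ·f₂)_z̄). -/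
open Complex

/-- Directional derivative of `f` in the direction `1` (the `u`-direction). -/
noncomputable def pdu (f : ℂ → ℂ) (z : ℂ) : ℂ := fderiv ℝ f z 1

/-- Directional derivative of `f` in the direction `i` (the `v`-direction). -/
noncomputable def pdv (f : ℂ → ℂ) (z : ℂ) : ℂ := fderiv ℝ f z Complex.I

/-- Wirtinger derivative `f_z = (1/2)(∂_u f - i ∂_v f)`. -/
noncomputable def wz (f : ℂ → ℂ) (z : ℂ) : ℂ :=
  (1 / 2 : ℂ) * (pdu f z - Complex.I * pdv f z)

/-- Wirtinger derivative `f_z̄ = (1/2)(∂_u f + i ∂_v f)`. -/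
noncomputable def wzb (f : ℂ → ℂ) (z : ℂ) : ℂ :=
  (1 / 2 : ℂ) * (pdu f z + Complex.I * pdv f z)

/-- Mixed Wirtinger derivative `f_{zz̄} = (f_z)_z̄`. -/
noncomputable def wzzb (f : ℂ → ℂ) (z : ℂ) : ℂ := wzb (fun w => wz f w) z

/-- `P_z` for a real-valued function, regarded as ℂ-valued. -/
noncomputable def rz (P : ℂ → ℝ) (z : ℂ) : ℂ := wz (fun w => (P w : ℂ)) z

/-- `P_z̄` for a real-valued function, regarded as ℂ-valued. -/
noncomputable def rzb (P : ℂ → ℝ) (z : ℂ) : ℂ := wzb (fun w => (P w : ℂ)) z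

/-- `P_{zz̄}` for a real-valued function, regarded as ℂ-valued. -/
noncomputable def rzzb (P : ℂ → ℝ) (z : ℂ) : ℂ := wzzb (fun w => (P w : ℂ)) z

/-- Weierstrass data of the first kind on `Ω`. -/
structure IsWD1 (Ω : Set ℂ) (g : ℂ → ℂ) (P Q : ℂ → ℝ) : Prop where
  holo : ∀ z ∈ Ω, DifferentiableAt ℂ g z
  gne : ∀ z ∈ Ω, g z ≠ 0
  cP : ContDiffOn ℝ 2 P Ω
  cQ : ContDiffOn ℝ 2 Q Ω
  pde : ∀ z ∈ Ω, rzzb P z = ((‖g z‖ : ℂ)) ^ 2 * rzzb Q z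
  nz : ∀ z ∈ Ω, rz P z - ((‖g z‖ : ℂ)) ^ 2 * rz Q z ≠ 0

/-- Weierstrass data of the second kind on `Ω`. -/
structure IsWD2 (Ω : Set ℂ) (h : ℂ → ℂ) (M N : ℂ → ℝ) : Prop where
  holo : ∀ z ∈ Ω, DifferentiableAt ℂ h z
  hne : ∀ z ∈ Ω, h z ≠ 0
  cM : ContDiffOn ℝ 2 M Ω
  cN : ContDiffOn ℝ 2 N Ω
  pde : ∀ z ∈ Ω, rzzb M z = (((h z).re : ℂ)) * rzzb N z
  nz : ∀ z ∈ Ω, rz M z - (((h z).re : ℂ)) * rz N z ≠ 0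

/-- Componentwise Wirtinger derivative `X_z` of an ℝ⁴-valued map. -/
noncomputable def vz (X : ℂ → Fin 4 → ℝ) (z : ℂ) : Fin 4 → ℂ :=
  fun i => rz (fun w => X w i) z

/-- Componentwise mixed Wirtinger derivative `X_{zz̄}` of an ℝ⁴-valued map. -/
noncomputable def vzzb (X : ℂ → Fin 4 → ℝ) (z : ℂ) : Fin 4 → ℂ :=
  fun i => rzzb (fun w => X w i) z

/-- The ℂ-bilinear Lorentz form on ℂ⁴. -/
def lorC (x y : Fin 4 → ℂ) : ℂ := x 0 * y 0 + x 1 * y 1 + x 2 * y 2 - x 3 * y 3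

/-- The Lorentz bilinear form on ℝ⁴. -/
def lorR (x y : Fin 4 → ℝ) : ℝ := x 0 * y 0 + x 1 * y 1 + x 2 * y 2 - x 3 * y 3

/-!
Write `φᵢ = (Xᵢ)_z`. Since `Xᵢ` is real, `conj φᵢ = (Xᵢ)_z̄`, so `conj ((φᵢ)_z̄) = (Xᵢ)_{z̄z}`,
which equals `(Xᵢ)_{zz̄} = (φᵢ)_z̄` by the symmetry of second derivatives: each `(φᵢ)_z̄` is
real. Solving the representation for the unknowns gives `Ψ = (φ₂ + φ₃)/2`,
`Ψ f₁ f₂ = (φ₃ - φ₂)/2` and `Ψ f₁, Ψ f₂ = (φ₀ ± i φ₁)/2`, and the three claims follow by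
ℂ-linearity of `∂_z̄`.
-/

open Filter Topology ComplexConjugate

section Wirtinger

lemma wz_conj (f : ℂ → ℂ) (z : ℂ) : wz (fun w => conj (f w)) z = conj (wzb f z) := by
  have hD : fderiv ℝ (fun w => conj (f w)) z = (conjCLE : ℂ →L[ℝ] ℂ).comp (fderiv ℝ f z) :=
    conjCLE.comp_fderiv
  simp only [wz, wzb, pdu, pdv, hD, ContinuousLinearMap.comp_apply, ContinuousLinearEquiv.coe_coe,
    conjCLE_apply, map_mul, map_add, conj_I, map_div₀, map_one, map_ofNat]
  ring

variable {f g : ℂ → ℂ} {z : ℂ}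

lemma Filter.EventuallyEq.wzb_eq (h : f =ᶠ[𝓝 z] g) : wzb f z = wzb g z := by
  rw [wzb, wzb, pdu, pdv, pdu, pdv, h.fderiv_eq]

lemma wzb_const_mul_add_const_mul (a b : ℂ) (hf : DifferentiableAt ℝ f z)
    (hg : DifferentiableAt ℝ g z) :
    wzb (fun w => a * f w + b * g w) z = a * wzb f z + b * wzb g z := by
  have hD : fderiv ℝ (fun w => a * f w + b * g w) z = a • fderiv ℝ f z + b • fderiv ℝ g z :=
    ((hf.hasFDerivAt.const_mul a).add (hg.hasFDerivAt.const_mul b)).fderiv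
  simp only [wzb, pdu, pdv, hD, add_apply, smul_apply, smul_eq_mul]
  ring

lemma hasFDerivAt_fderiv_apply (hf : ContDiffAt ℝ 2 f z) (a : ℂ) :
    HasFDerivAt (fun w => fderiv ℝ f w a) ((fderiv ℝ (fderiv ℝ f) z).flip a) z := by
  have hD : DifferentiableAt ℝ (fderiv ℝ f) z :=
    (hf.fderiv_right one_add_one_eq_two.le).differentiableAt one_ne_zero
  simpa using hD.hasFDerivAt.clm_apply (hasFDerivAt_const a z)

lemma hasFDerivAt_wz (hf : ContDiffAt ℝ 2 f z) :
    HasFDerivAt (wz f) ((1 / 2 : ℂ) • ((fderiv ℝ (fderiv ℝ f) z).flip 1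
      - I • (fderiv ℝ (fderiv ℝ f) z).flip I)) z :=
  ((hasFDerivAt_fderiv_apply hf 1).sub
    ((hasFDerivAt_fderiv_apply hf I).const_mul I)).const_mul _

lemma hasFDerivAt_wzb (hf : ContDiffAt ℝ 2 f z) :
    HasFDerivAt (wzb f) ((1 / 2 : ℂ) • ((fderiv ℝ (fderiv ℝ f) z).flip 1
      + I • (fderiv ℝ (fderiv ℝ f) z).flip I)) z :=
  ((hasFDerivAt_fderiv_apply hf 1).add
    ((hasFDerivAt_fderiv_apply hf I).const_mul I)).const_mul _

lemma wzb_wz_eq_wz_wzb (hf : ContDiffAt ℝ 2 f z) : wzb (wz f) z = wz (wzb f) z := by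
  have hsymm := hf.isSymmSndFDerivAt (by simp [minSmoothness_of_isRCLikeNormedField]) 1 I
  simp only [wz, wzb, pdu, pdv, (hasFDerivAt_wz hf).fderiv, (hasFDerivAt_wzb hf).fderiv,
    smul_apply, sub_apply, add_apply, ContinuousLinearMap.flip_apply, smul_eq_mul] at hsymm ⊢
  linear_combination (-I / 2) * hsymm

end Wirtinger

section RealValued

lemma conj_rz (P : ℂ → ℝ) (z : ℂ) : conj (rz P z) = rzb P z := by
  rw [rz, rzb]
  simpa only [conj_ofReal, RCLike.conj_conj] using congrArg conj (wz_conj (fun w => (P w : ℂ)) z)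

variable {P : ℂ → ℝ} {z : ℂ}

lemma ContDiffAt.ofReal_comp (hP : ContDiffAt ℝ 2 P z) : ContDiffAt ℝ 2 (fun w => (P w : ℂ)) z :=
  ofRealCLM.contDiff.contDiffAt.comp z hP

lemma ContDiffAt.differentiableAt_rz (hP : ContDiffAt ℝ 2 P z) : DifferentiableAt ℝ (rz P) z :=
  (hasFDerivAt_wz hP.ofReal_comp).differentiableAt

lemma ContDiffAt.conj_wzb_rz (hP : ContDiffAt ℝ 2 P z) : conj (wzb (rz P) z) = wzb (rz P) z := by
  calc conj (wzb (rz P) z) = wz (fun w => conj (rz P w)) z := (wz_conj _ z).symm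
    _ = wz (rzb P) z := by simp only [conj_rz]
    _ = wzb (rz P) z := (wzb_wz_eq_wz_wzb hP.ofReal_comp).symm

end RealValued

theorem stmt_8_general (Ω : Set ℂ) (hΩopen : IsOpen Ω)
    (X : ℂ → Fin 4 → ℝ) (hX : ∀ i, ContDiffOn ℝ 2 (fun w => X w i) Ω)
    (Ψ f₁ f₂ : ℂ → ℂ)
    (hrep : ∀ z ∈ Ω, ∀ i, vz X z i
      = Ψ z * ![f₁ z + f₂ z, -Complex.I * (f₁ z - f₂ z),
          1 - f₁ z * f₂ z, 1 + f₁ z * f₂ z] i) :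
    ∀ z ∈ Ω,
      wzb Ψ z = (starRingEnd ℂ) (wzb Ψ z) ∧
      wzb (fun w => Ψ w * f₁ w * f₂ w) z
        = (starRingEnd ℂ) (wzb (fun w => Ψ w * f₁ w * f₂ w) z) ∧
      wzb (fun w => Ψ w * f₁ w) z = (starRingEnd ℂ) (wzb (fun w => Ψ w * f₂ w) z) := by
  intro z hz
  set φ : Fin 4 → ℂ → ℂ := fun i w => vz X w i
  have hXz i : ContDiffAt ℝ 2 (fun w => X w i) z := (hX i).contDiffAt (hΩopen.mem_nhds hz)
  have hreal i : conj (wzb (φ i) z) = wzb (φ i) z := (hXz i).conj_wzb_rz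
  have hlin {F : ℂ → ℂ} {i j : Fin 4} {a b : ℂ} (h : ∀ w ∈ Ω, F w = a * φ i w + b * φ j w) :
      wzb F z = a * wzb (φ i) z + b * wzb (φ j) z := by
    rw [EventuallyEq.wzb_eq (eventually_of_mem (hΩopen.mem_nhds hz) h)]
    exact wzb_const_mul_add_const_mul a b (hXz i).differentiableAt_rz (hXz j).differentiableAt_rz
  have hφ : ∀ w ∈ Ω, φ 0 w = Ψ w * (f₁ w + f₂ w) ∧ φ 1 w = Ψ w * (-I * (f₁ w - f₂ w)) ∧
      φ 2 w = Ψ w * (1 - f₁ w * f₂ w) ∧ φ 3 w = Ψ w * (1 + f₁ w * f₂ w) := fun w hw =>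
    ⟨hrep w hw 0, hrep w hw 1, hrep w hw 2, hrep w hw 3⟩
  have hΨ : wzb Ψ z = 1 / 2 * wzb (φ 2) z + 1 / 2 * wzb (φ 3) z :=
    hlin fun w hw => by obtain ⟨-, -, h2, h3⟩ := hφ w hw; rw [h2, h3]; ring
  have hΨf₁f₂ : wzb (fun w => Ψ w * f₁ w * f₂ w) z = -1 / 2 * wzb (φ 2) z + 1 / 2 * wzb (φ 3) z :=
    hlin fun w hw => by obtain ⟨-, -, h2, h3⟩ := hφ w hw; rw [h2, h3]; ring
  have hΨf₁ : wzb (fun w => Ψ w * f₁ w) z = 1 / 2 * wzb (φ 0) z + I / 2 * wzb (φ 1) z :=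
    hlin fun w hw => by
      obtain ⟨h0, h1, -, -⟩ := hφ w hw
      rw [h0, h1]; linear_combination (Ψ w * (f₁ w - f₂ w) / 2) * I_sq
  have hΨf₂ : wzb (fun w => Ψ w * f₂ w) z = 1 / 2 * wzb (φ 0) z + -I / 2 * wzb (φ 1) z :=
    hlin fun w hw => by
      obtain ⟨h0, h1, -, -⟩ := hφ w hw
      rw [h0, h1]; linear_combination (-Ψ w * (f₁ w - f₂ w) / 2) * I_sq
  refine ⟨?_, ?_, ?_⟩ <;> simp [hΨ, hΨf₁f₂, hΨf₁, hΨf₂, hreal, map_ofNat]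

/-- Integrability conditions of Liu's system. -/
theorem stmt_8 (Ω : Set ℂ) (hΩne : Ω.Nonempty) (hΩopen : IsOpen Ω)
    (X : ℂ → Fin 4 → ℝ) (hX : ∀ i, ContDiffOn ℝ 2 (fun w => X w i) Ω)
    (Ψ f₁ f₂ : ℂ → ℂ)
    (hΨ : ContDiffOn ℝ 1 Ψ Ω) (hf₁ : ContDiffOn ℝ 1 f₁ Ω) (hf₂ : ContDiffOn ℝ 1 f₂ Ω)
    (hrep : ∀ z ∈ Ω, ∀ i, vz X z i
      = Ψ z * ![f₁ z + f₂ z, -Complex.I * (f₁ z - f₂ z),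
          1 - f₁ z * f₂ z, 1 + f₁ z * f₂ z] i) :
    ∀ z ∈ Ω,
      wzb Ψ z = (starRingEnd ℂ) (wzb Ψ z) ∧
      wzb (fun w => Ψ w * f₁ w * f₂ w) z
        = (starRingEnd ℂ) (wzb (fun w => Ψ w * f₁ w * f₂ w) z) ∧
      wzb (fun w => Ψ w * f₁ w) z = (starRingEnd ℂ) (wzb (fun w => Ψ w * f₂ w) z) :=
  stmt_8_general Ω hΩopen X hX Ψ f₁ f₂ hrep
end

section
/- Let Ω ⊆ ℂ be a nonempty open preconnected set, let h : Ω → ℂ be a function, let M, N : Ω → ℝ be C¹ functions, and let λ ∈ ℝ. Suppose X₀, X_λ : Ω → ℝ⁴ are C¹ maps satisfying, at every point of Ω, (X₀)_z = M_z·(1, −i, −h, h) + N_z·(0, i·h, (1 + h²)/2, (1 − h²)/2) and (X_λ)_z = M_z·(1, −i, −(h + iλ), h + iλ) + N_z·(0, i·(h + iλ), (1 + (h + iλ)²)/2, (1 − (h + iλ)²)/2). Let L_λ : ℝ⁴ → ℝ⁴ be the linear map with matrix rows (1, 0, 0, 0), (0, 1, −λ, −λ), (0, λ, 1 − λ²/2,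 −λ²/2), (0, −λ, λ²/2, 1 + λ²/2). Then there exists a constant vector c ∈ ℝ⁴ such that X_λ(z) = L_λ(X₀(z)) + c for all z ∈ Ω. -/
open Complex

/-!
The ℂ-linear extension of the parabolic rotation `L_λ` maps
`m (1, -i, -h, h) + n (0, ih, (1 + h²)/2, (1 - h²)/2)` to the same expression with `h`
replaced by `h + iλ`. Hence `X_λ` and `L_λ X₀` have the same Wirtinger derivative on `Ω`.
For a real-valued function, `f_z = (∂_u f - i ∂_v f)/2` determines both partial derivatives,
so `X_λ - L_λ X₀` has vanishing derivative and is constant on the open preconnected set `Ω`.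
-/

open Complex Matrix

lemma rz_eq_of_hasFDerivAt {P : ℂ → ℝ} {φ : ℂ →L[ℝ] ℝ} {z : ℂ} (hP : HasFDerivAt P φ z) :
    rz P z = (1 / 2 : ℂ) * (φ 1 - I * φ I) := by
  have hP' : HasFDerivAt (fun w => (P w : ℂ)) (ofRealCLM.comp φ) z :=
    ofRealCLM.hasFDerivAt.comp z hP
  simp [rz, wz, pdu, pdv, hP'.fderiv]

lemma fderiv_eq_of_rz_eq {P Q : ℂ → ℝ} {z : ℂ} (hP : DifferentiableAt ℝ P z)
    (hQ : DifferentiableAt ℝ Q z) (h : rz P z = rz Q z) : fderiv ℝ P z = fderiv ℝ Q z := by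
  rw [rz_eq_of_hasFDerivAt hP.hasFDerivAt, rz_eq_of_hasFDerivAt hQ.hasFDerivAt] at h
  have key : ((fderiv ℝ P z 1 : ℝ) : ℂ) - I * (fderiv ℝ P z I : ℝ)
      = ((fderiv ℝ Q z 1 : ℝ) : ℂ) - I * (fderiv ℝ Q z I : ℝ) := by
    linear_combination 2 * h
  have h_one : fderiv ℝ P z 1 = fderiv ℝ Q z 1 := by simpa using congrArg re key
  have h_I : fderiv ℝ P z I = fderiv ℝ Q z I := by simpa using congrArg im key
  refine ContinuousLinearMap.coe_injective (basisOneI.ext fun i => ?_)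
  fin_cases i
  exacts [by simpa using h_one, by simpa using h_I]

lemma rz_sum_mul {ι : Type*} [Fintype ι] (c : ι → ℝ) {f : ι → ℂ → ℝ} {z : ℂ}
    (hf : ∀ j, DifferentiableAt ℝ (f j) z) :
    rz (fun w => ∑ j, c j * f j w) z = ∑ j, c j * rz (f j) z := by
  rw [rz_eq_of_hasFDerivAt (HasFDerivAt.fun_sum fun j _ => (hf j).hasFDerivAt.const_mul (c j))]
  simp only [one_div, _root_.sum_apply, _root_.smul_apply, smul_eq_mul, ofReal_sum, ofReal_mul,
    Finset.mul_sum, ← Finset.sum_sub_distrib, rz_eq_of_hasFDerivAt (hf _).hasFDerivAt]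
  exact Finset.sum_congr rfl fun j _ => by ring

lemma differentiableAt_mulVec_apply {m n : Type*} [Fintype n] (A : Matrix m n ℝ)
    {X : ℂ → n → ℝ} {z : ℂ} (hX : ∀ j, DifferentiableAt ℝ (fun w => X w j) z) (i : m) :
    DifferentiableAt ℝ (fun w => (A *ᵥ X w) i) z :=
  DifferentiableAt.fun_sum fun j _ => (hX j).const_mul (A i j)

lemma rz_mulVec {m n : Type*} [Fintype n] (A : Matrix m n ℝ) {X : ℂ → n → ℝ} {z : ℂ}
    (hX : ∀ j, DifferentiableAt ℝ (fun w => X w j) z) (i : m) :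
    rz (fun w => (A *ᵥ X w) i) z = (A.map ofReal *ᵥ fun j => rz (fun w => X w j) z) i := by
  simp only [mulVec, dotProduct, map_apply]
  exact rz_sum_mul (A i) hX

noncomputable def parabolicRotation (l : ℝ) : Matrix (Fin 4) (Fin 4) ℝ :=
  !![1, 0, 0, 0;
     0, 1, -l, -l;
     0, l, 1 - l ^ 2 / 2, -(l ^ 2 / 2);
     0, -l, l ^ 2 / 2, 1 + l ^ 2 / 2]

/-- With `m = M_z` and `n = N_z`, this is the Wirtinger derivative `X_z` prescribed by the data
`(h, M, N)`. -/
noncomputable def weierstrassVector (m n h : ℂ) : Fin 4 → ℂ := fun i =>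
  m * ![1, -I, -h, h] i + n * ![0, I * h, (1 + h ^ 2) / 2, (1 - h ^ 2) / 2] i

lemma parabolicRotation_mulVec_weierstrassVector (l : ℝ) (m n h : ℂ) :
    (parabolicRotation l).map ofReal *ᵥ weierstrassVector m n h
      = weierstrassVector m n (h + I * l) := by
  ext i
  fin_cases i <;>
    simp [parabolicRotation, weierstrassVector, mulVec, dotProduct, Fin.sum_univ_four] <;>
    grind [I_sq]

theorem stmt_11_general (Ω : Set ℂ) (hΩopen : IsOpen Ω)
    (hΩconn : IsPreconnected Ω)
    (h : ℂ → ℂ) (M N : ℂ → ℝ) (l : ℝ)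
    (X₀ Xl : ℂ → Fin 4 → ℝ)
    (hX₀ : ∀ i, ContDiffOn ℝ 1 (fun w => X₀ w i) Ω)
    (hXl : ∀ i, ContDiffOn ℝ 1 (fun w => Xl w i) Ω)
    (hrep₀ : ∀ z ∈ Ω, ∀ i, vz X₀ z i
      = rz M z * ![1, -Complex.I, -h z, h z] i
        + rz N z * ![0, Complex.I * h z, (1 + h z ^ 2) / 2, (1 - h z ^ 2) / 2] i)
    (hrepl : ∀ z ∈ Ω, ∀ i, vz Xl z i
      = rz M z * ![1, -Complex.I, -(h z + Complex.I * l), h z + Complex.I * l] i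
        + rz N z * ![0, Complex.I * (h z + Complex.I * l),
            (1 + (h z + Complex.I * l) ^ 2) / 2,
            (1 - (h z + Complex.I * l) ^ 2) / 2] i)
    (L : Matrix (Fin 4) (Fin 4) ℝ)
    (hL : L = !![1, 0, 0, 0;
                 0, 1, -l, -l;
                 0, l, 1 - l ^ 2 / 2, -(l ^ 2 / 2);
                 0, -l, l ^ 2 / 2, 1 + l ^ 2 / 2]) :
    ∃ c : Fin 4 → ℝ, ∀ z ∈ Ω, ∀ i, Xl z i = L.mulVec (X₀ z) i + c i := by
  subst hL
  have hdiff : ∀ {X : ℂ → Fin 4 → ℝ}, (∀ j, ContDiffOn ℝ 1 (fun w => X w j) Ω) →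
      ∀ p ∈ Ω, ∀ j, DifferentiableAt ℝ (fun w => X w j) p := fun hX p hp j =>
    ((hX j).contDiffAt (hΩopen.mem_nhds hp)).differentiableAt one_ne_zero
  have hvz : ∀ p ∈ Ω, vz Xl p = (parabolicRotation l).map ofReal *ᵥ vz X₀ p := fun p hp => by
    rw [show vz X₀ p = weierstrassVector (rz M p) (rz N p) (h p) from funext (hrep₀ p hp),
      parabolicRotation_mulVec_weierstrassVector]
    exact funext (hrepl p hp)
  choose c hc using fun i => hΩopen.exists_eq_add_of_fderiv_eq hΩconn
    (fun p hp => (hdiff hXl p hp i).differentiableWithinAt)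
    (fun p hp => (differentiableAt_mulVec_apply _ (hdiff hX₀ p hp) i).differentiableWithinAt)
    (fun p hp => fderiv_eq_of_rz_eq (hdiff hXl p hp i)
      (differentiableAt_mulVec_apply _ (hdiff hX₀ p hp) i)
      ((congrFun (hvz p hp) i).trans (rz_mulVec _ (hdiff hX₀ p hp) i).symm))
  exact ⟨c, fun z hz i => hc i hz⟩

/-- The parabolic deformation is induced by a parabolic rotation of 𝕃⁴. -/
theorem stmt_11 (Ω : Set ℂ) (hΩne : Ω.Nonempty) (hΩopen : IsOpen Ω)
    (hΩconn : IsPreconnected Ω)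
    (h : ℂ → ℂ) (M N : ℂ → ℝ)
    (hM : ContDiffOn ℝ 1 M Ω) (hN : ContDiffOn ℝ 1 N Ω) (l : ℝ)
    (X₀ Xl : ℂ → Fin 4 → ℝ)
    (hX₀ : ∀ i, ContDiffOn ℝ 1 (fun w => X₀ w i) Ω)
    (hXl : ∀ i, ContDiffOn ℝ 1 (fun w => Xl w i) Ω)
    (hrep₀ : ∀ z ∈ Ω, ∀ i, vz X₀ z i
      = rz M z * ![1, -Complex.I, -h z, h z] i
        + rz N z * ![0, Complex.I * h z, (1 + h z ^ 2) / 2, (1 - h z ^ 2) / 2] i)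
    (hrepl : ∀ z ∈ Ω, ∀ i, vz Xl z i
      = rz M z * ![1, -Complex.I, -(h z + Complex.I * l), h z + Complex.I * l] i
        + rz N z * ![0, Complex.I * (h z + Complex.I * l),
            (1 + (h z + Complex.I * l) ^ 2) / 2,
            (1 - (h z + Complex.I * l) ^ 2) / 2] i)
    (L : Matrix (Fin 4) (Fin 4) ℝ)
    (hL : L = !![1, 0, 0, 0;
                 0, 1, -l, -l;
                 0, l, 1 - l ^ 2 / 2, -(l ^ 2 / 2);
                 0, -l, l ^ 2 / 2, 1 + l ^ 2 / 2]) :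
    ∃ c : Fin 4 → ℝ, ∀ z ∈ Ω, ∀ i, Xl z i = L.mulVec (X₀ z) i + c i :=
  stmt_11_general Ω hΩopen hΩconn h M N l X₀ Xl hX₀ hXl hrep₀ hrepl L hL
end

section
/- Let Ω ⊆ ℂ be a nonempty open preconnected set, let g : Ω → ℂ be a function with g(z) ≠ 0 for all z ∈ Ω, let P, Q : Ω → ℝ be C¹ functions, and let η ∈ ℝ. Suppose X₀, X_η : Ω → ℝ⁴ are C¹ maps satisfying, at every point of Ω, (X₀)_z = P_z·(1/g, i/g, 1, 1) + Q_z·(g, −i·g, −1, 1) and (X_η)_z = e^η·P_z·(1/(e^η g), i/(e^η g), 1, 1) + e^{−η}·Q_z·(e^η g, −i·e^η g, −1, 1). Let L_η : ℝ⁴ → ℝ⁴ be the linear map with matrix rows (1, 0, 0, 0), (0, 1, 0, 0), (0, 0, cosh η, sinh η), (0, 0, sinh η, cosh η). Then there exists a constant vector c ∈ ℝ⁴ such that X_η(z) = L_η(X₀(z)) + c for all z ∈ Ω. -/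
/-!
The boost fixes the first two coordinates and scales the null directions `(1, 1)` and `(-1, 1)` of
the `(x₃, x₄)`-plane by `e^η` and `e^{-η}`; this is exactly the change of data
`(g, P, Q) ↦ (e^η g, e^η P, e^{-η} Q)`, so `X_η` and `L_η X₀` have the same `z`-derivative. For a
real map, `f_z = (∂_u f - i ∂_v f) / 2` determines the whole differential, so the two maps have the
same differential on the connected open set `Ω` and differ by a constant.
-/

open Complex

open Matrix

noncomputable def wirtinger {ι : Type*} (ℓ : ℂ →L[ℝ] ι → ℝ) : ι → ℂ :=
  fun i => (1 / 2 : ℂ) * ((ℓ 1 i : ℂ) - I * (ℓ I i : ℂ))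

lemma wirtinger_injective {ι : Type*} : Function.Injective (wirtinger (ι := ι)) := by
  intro ℓ ℓ' h
  have h_one : ℓ 1 = ℓ' 1 := funext fun i => by
    simpa [wirtinger] using congrArg re (congrFun h i)
  have h_I : ℓ I = ℓ' I := funext fun i => by
    simpa [wirtinger] using congrArg im (congrFun h i)
  refine ContinuousLinearMap.coe_injective (basisOneI.ext fun j => ?_)
  fin_cases j <;> simp [h_one, h_I]

lemma wirtinger_comp_mulVec {ι : Type*} [Fintype ι] (A : Matrix ι ι ℝ)
    (ℓ : ℂ →L[ℝ] ι → ℝ) :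
    wirtinger (A.mulVecLin.toContinuousLinearMap.comp ℓ) = A.map ofReal *ᵥ wirtinger ℓ := by
  funext i
  simp only [wirtinger, ContinuousLinearMap.comp_apply, LinearMap.coe_toContinuousLinearMap',
    Matrix.mulVecLin_apply, Matrix.mulVec, dotProduct, Matrix.map_apply, ofReal_sum, ofReal_mul,
    Finset.mul_sum, ← Finset.sum_sub_distrib]
  exact Finset.sum_congr rfl fun j _ => by ring

lemma vz_eq_wirtinger {X : ℂ → Fin 4 → ℝ} {z : ℂ} (hX : DifferentiableAt ℝ X z) :
    vz X z = wirtinger (fderiv ℝ X z) := by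
  funext i
  have hderiv : HasFDerivAt (fun w => (X w i : ℂ))
      (ofRealCLM.comp ((ContinuousLinearMap.proj i).comp (fderiv ℝ X z))) z :=
    ofRealCLM.hasFDerivAt.comp z
      ((ContinuousLinearMap.proj (R := ℝ) (φ := fun _ : Fin 4 => ℝ) i).hasFDerivAt.comp z
        hX.hasFDerivAt)
  simp [vz, rz, wz, pdu, pdv, wirtinger, hderiv.fderiv]

noncomputable def lorentzBoost (η : ℝ) : Matrix (Fin 4) (Fin 4) ℝ :=
  !![1, 0, 0, 0;
     0, 1, 0, 0;
     0, 0, Real.cosh η, Real.sinh η;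
     0, 0, Real.sinh η, Real.cosh η]

lemma lorentzBoost_mulVec (η : ℝ) (p q g : ℂ) :
    (lorentzBoost η).map ofReal *ᵥ
        (fun i => p * ![1 / g, I / g, 1, 1] i + q * ![g, -I * g, -1, 1] i)
      = fun i => (Real.exp η : ℂ) * p * ![1 / ((Real.exp η : ℂ) * g),
          I / ((Real.exp η : ℂ) * g), 1, 1] i
        + (Real.exp (-η) : ℂ) * q * ![(Real.exp η : ℂ) * g,
            -I * ((Real.exp η : ℂ) * g), -1, 1] i := by
  funext i
  fin_cases i <;>
    simp [lorentzBoost, Matrix.mulVec, dotProduct, Fin.sum_univ_four, Real.cosh_eq,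
      Real.sinh_eq, Real.exp_neg, div_eq_mul_inv] <;>
    field_simp <;>
    ring

theorem stmt_13_general (Ω : Set ℂ) (hΩopen : IsOpen Ω)
    (hΩconn : IsPreconnected Ω)
    (g : ℂ → ℂ) (P Q : ℂ → ℝ) (η : ℝ)
    (X₀ Xη : ℂ → Fin 4 → ℝ)
    (hX₀ : ∀ i, ContDiffOn ℝ 1 (fun w => X₀ w i) Ω)
    (hXη : ∀ i, ContDiffOn ℝ 1 (fun w => Xη w i) Ω)
    (hrep₀ : ∀ z ∈ Ω, ∀ i, vz X₀ z i
      = rz P z * ![1 / g z, Complex.I / g z, 1, 1] i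
        + rz Q z * ![g z, -Complex.I * g z, -1, 1] i)
    (hrepη : ∀ z ∈ Ω, ∀ i, vz Xη z i
      = (Real.exp η : ℂ) * rz P z * ![1 / ((Real.exp η : ℂ) * g z),
          Complex.I / ((Real.exp η : ℂ) * g z), 1, 1] i
        + (Real.exp (-η) : ℂ) * rz Q z * ![(Real.exp η : ℂ) * g z,
            -Complex.I * ((Real.exp η : ℂ) * g z), -1, 1] i)
    (L : Matrix (Fin 4) (Fin 4) ℝ)
    (hL : L = !![1, 0, 0, 0;
                 0, 1, 0, 0;
                 0, 0, Real.cosh η, Real.sinh η;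
                 0, 0, Real.sinh η, Real.cosh η]) :
    ∃ c : Fin 4 → ℝ, ∀ z ∈ Ω, ∀ i, Xη z i = L.mulVec (X₀ z) i + c i := by
  have hd₀ : DifferentiableOn ℝ X₀ Ω := (contDiffOn_pi.2 hX₀).differentiableOn one_ne_zero
  have hdη : DifferentiableOn ℝ Xη Ω := (contDiffOn_pi.2 hXη).differentiableOn one_ne_zero
  set Lc := L.mulVecLin.toContinuousLinearMap
  have hfderiv : Set.EqOn (fderiv ℝ Xη) (fderiv ℝ (Lc ∘ X₀)) Ω := by
    intro z hz
    have h₀ := hd₀.differentiableAt (hΩopen.mem_nhds hz)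
    rw [(Lc.hasFDerivAt.comp z h₀.hasFDerivAt).fderiv]
    apply wirtinger_injective
    rw [wirtinger_comp_mulVec, ← vz_eq_wirtinger h₀,
      ← vz_eq_wirtinger (hdη.differentiableAt (hΩopen.mem_nhds hz)),
      funext (hrepη z hz), funext (hrep₀ z hz), hL]
    exact (lorentzBoost_mulVec η _ _ _).symm
  obtain ⟨c, hc⟩ := hΩopen.exists_eq_add_of_fderiv_eq hΩconn hdη
    (Lc.differentiable.comp_differentiableOn hd₀) hfderiv
  exact ⟨c, fun z hz i => congrFun (hc hz) i⟩

/-- The hyperbolic deformation is induced by a Lorentz boost of 𝕃⁴. -/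
theorem stmt_13 (Ω : Set ℂ) (hΩne : Ω.Nonempty) (hΩopen : IsOpen Ω)
    (hΩconn : IsPreconnected Ω)
    (g : ℂ → ℂ) (hgne : ∀ z ∈ Ω, g z ≠ 0) (P Q : ℂ → ℝ)
    (hP : ContDiffOn ℝ 1 P Ω) (hQ : ContDiffOn ℝ 1 Q Ω) (η : ℝ)
    (X₀ Xη : ℂ → Fin 4 → ℝ)
    (hX₀ : ∀ i, ContDiffOn ℝ 1 (fun w => X₀ w i) Ω)
    (hXη : ∀ i, ContDiffOn ℝ 1 (fun w => Xη w i) Ω)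
    (hrep₀ : ∀ z ∈ Ω, ∀ i, vz X₀ z i
      = rz P z * ![1 / g z, Complex.I / g z, 1, 1] i
        + rz Q z * ![g z, -Complex.I * g z, -1, 1] i)
    (hrepη : ∀ z ∈ Ω, ∀ i, vz Xη z i
      = (Real.exp η : ℂ) * rz P z * ![1 / ((Real.exp η : ℂ) * g z),
          Complex.I / ((Real.exp η : ℂ) * g z), 1, 1] i
        + (Real.exp (-η) : ℂ) * rz Q z * ![(Real.exp η : ℂ) * g z,
            -Complex.I * ((Real.exp η : ℂ) * g z), -1, 1] i)
    (L : Matrix (Fin 4) (Fin 4) ℝ)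
    (hL : L = !![1, 0, 0, 0;
                 0, 1, 0, 0;
                 0, 0, Real.cosh η, Real.sinh η;
                 0, 0, Real.sinh η, Real.cosh η]) :
    ∃ c : Fin 4 → ℝ, ∀ z ∈ Ω, ∀ i, Xη z i = L.mulVec (X₀ z) i + c i :=
  stmt_13_general Ω hΩopen hΩconn g P Q η X₀ Xη hX₀ hXη hrep₀ hrepη L hL
end

section
/- Let θ ∈ ℝ and define h : ℂ → ℂ by h(z) := e^{iz}, and M_θ, N_θ : ℝ² → ℝ by M_θ(u, v) := cos θ · sinh u · sin u − sin θ · cos u · cos v and N_θ(u, v) := e^v·(cos θ · cosh u + sin θ · sin v). Then for all (u, v) ∈ ℝ²: (i) ∂_u∂_u M_θ + ∂_v∂_v M_θ = e^{−v}·cos u · (∂_u∂_u N_θ + ∂_v∂_v N_θ), i.e. (M_θ)_{zz̄} = (Re h)·(N_θ)_{zz̄}; (ii) (M_θ)_z − (Re h)·(N_θ)_z = (i/2)·e^{−iu}·(cos θ · cosh u + sin θ · cos v). In particular, (M_θ)_z − (Re h)·(N_θ)_z ≠ 0 at every point (u, v) where cos θ · cosh u + sin θ · cos v ≠ 0, so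 (h, M_θ, N_θ) is a Weierstrass data of the second kind on any open set where cos θ · cosh u + sin θ · cos v ≠ 0. -/
open Complex

/-- Second iterated directional derivative `∂_u ∂_u f`. -/
noncomputable def pduu (f : ℂ → ℂ) (z : ℂ) : ℂ := pdu (fun w => pdu f w) z

/-- Second iterated directional derivative `∂_v ∂_v f`. -/
noncomputable def pdvv (f : ℂ → ℂ) (z : ℂ) : ℂ := pdv (fun w => pdv f w) z

/-!
For a `C²` function, symmetry of the second derivative gives `f_{zz̄} = (∂_u² f + ∂_v² f) / 4`,
so the equation `M_{zz̄} = (Re h) N_{zz̄}` is the Laplacian identity (i), as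
`Re h = e^{-v} cos u`. With `a = cos θ`, `b = sin θ` both Laplacians are explicit:
`ΔM = 2 cos u (a cosh u + b cos v)` and `ΔN = 2 e^v (a cosh u + b cos v)`.
The same factor `a cosh u + b cos v` appears in `M_z - (Re h) N_z` after multiplying by `e^{iu}`.
-/

section Partials

variable {E : Type*} [NormedAddCommGroup E] [NormedSpace ℝ E]

-- Stronger than the existence of the two partial derivatives: `f` is real-differentiable at `z`.
def HasPartialsAt (f : ℂ → E) (p q : E) (z : ℂ) : Prop :=
  ∃ L : ℂ →L[ℝ] E, HasFDerivAt f L z ∧ L 1 = p ∧ L I = q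

theorem HasFDerivAt.hasPartialsAt {f : ℂ → E} {L : ℂ →L[ℝ] E} {z : ℂ}
    (hf : HasFDerivAt f L z) : HasPartialsAt f (L 1) (L I) z :=
  ⟨L, hf, rfl, rfl⟩

variable {f g : ℂ → E} {p q p' q' : E} {z : ℂ}

theorem HasPartialsAt.add (hf : HasPartialsAt f p q z) (hg : HasPartialsAt g p' q' z) :
    HasPartialsAt (fun w => f w + g w) (p + p') (q + q') z := by
  obtain ⟨L, hL, rfl, rfl⟩ := hf
  obtain ⟨L', hL', rfl, rfl⟩ := hg
  exact (hL.add hL').hasPartialsAt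

theorem HasPartialsAt.sub (hf : HasPartialsAt f p q z) (hg : HasPartialsAt g p' q' z) :
    HasPartialsAt (fun w => f w - g w) (p - p') (q - q') z := by
  obtain ⟨L, hL, rfl, rfl⟩ := hf
  obtain ⟨L', hL', rfl, rfl⟩ := hg
  exact (hL.sub hL').hasPartialsAt

theorem HasPartialsAt.comp_re {g : ℝ → E} {g' : E} (hg : HasDerivAt g g' z.re) :
    HasPartialsAt (fun w => g w.re) g' 0 z := by
  simpa [Function.comp_def] using (hg.hasFDerivAt.comp z reCLM.hasFDerivAt).hasPartialsAt

theorem HasPartialsAt.comp_im {g : ℝ → E} {g' : E} (hg : HasDerivAt g g' z.im) :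
    HasPartialsAt (fun w => g w.im) 0 g' z := by
  simpa [Function.comp_def] using (hg.hasFDerivAt.comp z imCLM.hasFDerivAt).hasPartialsAt

end Partials

section Algebra

variable {𝔸 : Type*} [NormedCommRing 𝔸] [NormedAlgebra ℝ 𝔸] {f g : ℂ → 𝔸} {p q p' q' : 𝔸}
  {z : ℂ}

theorem HasPartialsAt.mul (hf : HasPartialsAt f p q z) (hg : HasPartialsAt g p' q' z) :
    HasPartialsAt (fun w => f w * g w) (p * g z + f z * p') (q * g z + f z * q') z := by
  obtain ⟨L, hL, rfl, rfl⟩ := hf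
  obtain ⟨L', hL', rfl, rfl⟩ := hg
  refine ⟨_, hL.mul hL', ?_, ?_⟩ <;> simp only [add_apply, smul_apply, smul_eq_mul] <;> ring

theorem HasPartialsAt.const_mul (c : 𝔸) (hf : HasPartialsAt f p q z) :
    HasPartialsAt (fun w => c * f w) (c * p) (c * q) z := by
  obtain ⟨L, hL, rfl, rfl⟩ := hf
  refine ⟨_, hL.const_mul c, ?_, ?_⟩ <;> simp

end Algebra

theorem HasPartialsAt.ofReal {f : ℂ → ℝ} {p q : ℝ} {z : ℂ} (hf : HasPartialsAt f p q z) :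
    HasPartialsAt (fun w => (f w : ℂ)) p q z := by
  obtain ⟨L, hL, rfl, rfl⟩ := hf
  exact (ofRealCLM.hasFDerivAt.comp z hL).hasPartialsAt

section Wirtinger

variable {f : ℂ → ℂ} {p q : ℂ} {z : ℂ}

theorem HasPartialsAt.pdu_eq (hf : HasPartialsAt f p q z) : pdu f z = p := by
  obtain ⟨L, hL, rfl, -⟩ := hf
  rw [pdu, hL.fderiv]

theorem HasPartialsAt.pdv_eq (hf : HasPartialsAt f p q z) : pdv f z = q := by
  obtain ⟨L, hL, -, rfl⟩ := hf
  rw [pdv, hL.fderiv]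

theorem HasPartialsAt.wz_eq (hf : HasPartialsAt f p q z) : wz f z = (p - I * q) / 2 := by
  rw [wz, hf.pdu_eq, hf.pdv_eq]; ring

theorem HasPartialsAt.wzb_eq (hf : HasPartialsAt f p q z) : wzb f z = (p + I * q) / 2 := by
  rw [wzb, hf.pdu_eq, hf.pdv_eq]; ring

theorem pduu_eq {p q : ℂ → ℂ} {a b : ℂ} (hf : ∀ w, HasPartialsAt f (p w) (q w) w)
    (hp : HasPartialsAt p a b z) : pduu f z = a := by
  rw [pduu, show (fun w => pdu f w) = p from funext fun w => (hf w).pdu_eq, hp.pdu_eq]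

theorem pdvv_eq {p q : ℂ → ℂ} {c d : ℂ} (hf : ∀ w, HasPartialsAt f (p w) (q w) w)
    (hq : HasPartialsAt q c d z) : pdvv f z = d := by
  rw [pdvv, show (fun w => pdv f w) = q from funext fun w => (hf w).pdv_eq, hq.pdv_eq]

theorem hasPartialsAt_fderiv_apply (hf : ContDiffAt ℝ 2 f z) (v : ℂ) :
    HasPartialsAt (fun w => fderiv ℝ f w v)
      (fderiv ℝ (fderiv ℝ f) z 1 v) (fderiv ℝ (fderiv ℝ f) z I v) z := by
  have hd : DifferentiableAt ℝ (fderiv ℝ f) z :=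
    (hf.fderiv_right (m := 1) le_rfl).differentiableAt one_ne_zero
  simpa using (hd.hasFDerivAt.clm_apply (hasFDerivAt_const v z)).hasPartialsAt

theorem wzzb_eq_of_contDiffAt (hf : ContDiffAt ℝ 2 f z) :
    wzzb f z = (pduu f z + pdvv f z) / 4 := by
  set D := fderiv ℝ (fderiv ℝ f) z
  have hu : HasPartialsAt (pdu f) (D 1 1) (D I 1) z := hasPartialsAt_fderiv_apply hf 1
  have hv : HasPartialsAt (pdv f) (D 1 I) (D I I) z := hasPartialsAt_fderiv_apply hf I
  have hsymm : D 1 I = D I 1 := hf.isSymmSndFDerivAt (by simp) 1 I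
  have hw : HasPartialsAt (fun w => wz f w) (1 / 2 * (D 1 1 - I * D 1 I))
      (1 / 2 * (D I 1 - I * D I I)) z :=
    (hu.sub (hv.const_mul I)).const_mul _
  rw [wzzb, hw.wzb_eq, pduu, pdvv, hu.pdu_eq, hv.pdv_eq, hsymm]
  linear_combination (-D I I / 4) * I_sq

theorem rzzb_eq_of_contDiffAt {P : ℂ → ℝ} (hP : ContDiffAt ℝ 2 P z) :
    rzzb P z = (pduu (fun w => (P w : ℂ)) z + pdvv (fun w => (P w : ℂ)) z) / 4 :=
  wzzb_eq_of_contDiffAt (ofRealCLM.contDiff.contDiffAt.comp z hP)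

end Wirtinger

theorem re_exp_I_mul (z : ℂ) : (exp (I * z)).re = Real.exp (-z.im) * Real.cos z.re := by
  simp [exp_re]

noncomputable def cousinM (a b : ℝ) (z : ℂ) : ℝ :=
  a * Real.sinh z.re * Real.sin z.re - b * Real.cos z.re * Real.cos z.im

noncomputable def cousinN (a b : ℝ) (z : ℂ) : ℝ :=
  Real.exp z.im * (a * Real.cosh z.re + b * Real.sin z.im)

section Cousins

variable (a b : ℝ) (z : ℂ)

theorem contDiff_cousinM {n : WithTop ℕ∞} : ContDiff ℝ n (cousinM a b) := by
  have : ContDiff ℝ n re := reCLM.contDiff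
  have : ContDiff ℝ n im := imCLM.contDiff
  unfold cousinM
  fun_prop

theorem contDiff_cousinN {n : WithTop ℕ∞} : ContDiff ℝ n (cousinN a b) := by
  have : ContDiff ℝ n re := reCLM.contDiff
  have : ContDiff ℝ n im := imCLM.contDiff
  unfold cousinN
  fun_prop

theorem hasPartialsAt_cousinM : HasPartialsAt (cousinM a b)
    (a * (Real.cosh z.re * Real.sin z.re + Real.sinh z.re * Real.cos z.re)
      + b * (Real.sin z.re * Real.cos z.im))
    (b * (Real.cos z.re * Real.sin z.im)) z := by
  unfold cousinM
  have h : HasPartialsAt _ _ _ z :=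
    (((HasPartialsAt.comp_re (Real.hasDerivAt_sinh _)).const_mul a).mul
    (HasPartialsAt.comp_re (Real.hasDerivAt_sin _))).sub
    (((HasPartialsAt.comp_re (Real.hasDerivAt_cos _)).const_mul b).mul
    (HasPartialsAt.comp_im (Real.hasDerivAt_cos _)))
  convert h using 1 <;> first | rfl | ring

theorem hasPartialsAt_cousinN : HasPartialsAt (cousinN a b)
    (Real.exp z.im * (a * Real.sinh z.re))
    (Real.exp z.im * (a * Real.cosh z.re + b * Real.sin z.im)
      + Real.exp z.im * (b * Real.cos z.im)) z := by
  unfold cousinN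
  have h : HasPartialsAt _ _ _ z := (HasPartialsAt.comp_im (Real.hasDerivAt_exp _)).mul
    (((HasPartialsAt.comp_re (Real.hasDerivAt_cosh _)).const_mul a).add
    ((HasPartialsAt.comp_im (Real.hasDerivAt_sin _)).const_mul b))
  convert h using 1 <;> first | rfl | ring

theorem laplacian_cousinM :
    pduu (fun w => (cousinM a b w : ℂ)) z + pdvv (fun w => (cousinM a b w : ℂ)) z =
      ((2 * Real.cos z.re * (a * Real.cosh z.re + b * Real.cos z.im) : ℝ) : ℂ) := by
  have hM := fun w => (hasPartialsAt_cousinM a b w).ofReal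
  have hMu : HasPartialsAt _ _ _ z := ((((HasPartialsAt.comp_re (Real.hasDerivAt_cosh _)).mul
    (HasPartialsAt.comp_re (Real.hasDerivAt_sin _))).add
    ((HasPartialsAt.comp_re (Real.hasDerivAt_sinh _)).mul
    (HasPartialsAt.comp_re (Real.hasDerivAt_cos _)))).const_mul a).add
    (((HasPartialsAt.comp_re (Real.hasDerivAt_sin _)).mul
    (HasPartialsAt.comp_im (Real.hasDerivAt_cos _))).const_mul b)
  have hMv : HasPartialsAt _ _ _ z := (((HasPartialsAt.comp_re (Real.hasDerivAt_cos _)).mul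
    (HasPartialsAt.comp_im (Real.hasDerivAt_sin _))).const_mul b)
  rw [pduu_eq hM hMu.ofReal, pdvv_eq hM hMv.ofReal]
  push_cast
  ring

theorem laplacian_cousinN :
    pduu (fun w => (cousinN a b w : ℂ)) z + pdvv (fun w => (cousinN a b w : ℂ)) z =
      ((2 * Real.exp z.im * (a * Real.cosh z.re + b * Real.cos z.im) : ℝ) : ℂ) := by
  have hN := fun w => (hasPartialsAt_cousinN a b w).ofReal
  have hNu : HasPartialsAt _ _ _ z := (HasPartialsAt.comp_im (Real.hasDerivAt_exp _)).mul
    ((HasPartialsAt.comp_re (Real.hasDerivAt_sinh _)).const_mul a)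
  have hNv : HasPartialsAt _ _ _ z := ((HasPartialsAt.comp_im (Real.hasDerivAt_exp _)).mul
    (((HasPartialsAt.comp_re (Real.hasDerivAt_cosh _)).const_mul a).add
    ((HasPartialsAt.comp_im (Real.hasDerivAt_sin _)).const_mul b))).add
    ((HasPartialsAt.comp_im (Real.hasDerivAt_exp _)).mul
    ((HasPartialsAt.comp_im (Real.hasDerivAt_cos _)).const_mul b))
  rw [pduu_eq hN hNu.ofReal, pdvv_eq hN hNv.ofReal]
  push_cast
  ring

theorem laplacian_cousinM_eq :
    pduu (fun w => (cousinM a b w : ℂ)) z + pdvv (fun w => (cousinM a b w : ℂ)) z =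
      ((Real.exp (-z.im) * Real.cos z.re : ℝ) : ℂ) *
        (pduu (fun w => (cousinN a b w : ℂ)) z + pdvv (fun w => (cousinN a b w : ℂ)) z) := by
  rw [laplacian_cousinM, laplacian_cousinN, ← ofReal_mul, Real.exp_neg]
  congr 1
  field_simp

theorem rzzb_cousinM_eq :
    rzzb (cousinM a b) z = ((exp (I * z)).re : ℂ) * rzzb (cousinN a b) z := by
  rw [rzzb_eq_of_contDiffAt (contDiff_cousinM a b).contDiffAt,
    rzzb_eq_of_contDiffAt (contDiff_cousinN a b).contDiffAt, laplacian_cousinM_eq, re_exp_I_mul]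
  ring

theorem rz_cousinM_sub :
    rz (cousinM a b) z - ((exp (I * z)).re : ℂ) * rz (cousinN a b) z =
      I / 2 * exp (-(I * z.re)) * ((a * Real.cosh z.re + b * Real.cos z.im : ℝ) : ℂ) := by
  have hexp : exp (-(I * z.re)) = cos z.re - I * sin z.re := by
    rw [show -(I * z.re) = -z.re * I by ring, exp_mul_I, cos_neg, sin_neg]
    ring
  rw [rz, rz, (hasPartialsAt_cousinM a b z).ofReal.wz_eq,
    (hasPartialsAt_cousinN a b z).ofReal.wz_eq, re_exp_I_mul, hexp, Real.exp_neg]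
  push_cast
  field_simp
  linear_combination sin z.re * (a * cosh z.re + b * cos z.im) * I_sq

theorem rz_cousinM_sub_ne_zero (hz : a * Real.cosh z.re + b * Real.cos z.im ≠ 0) :
    rz (cousinM a b) z - ((exp (I * z)).re : ℂ) * rz (cousinN a b) z ≠ 0 := by
  rw [rz_cousinM_sub]
  exact mul_ne_zero (mul_ne_zero (by simp) (exp_ne_zero _)) (ofReal_ne_zero.mpr hz)

theorem isWD2_cousin {Ω : Set ℂ} (hΩ : ∀ z ∈ Ω, a * Real.cosh z.re + b * Real.cos z.im ≠ 0) :
    IsWD2 Ω (fun z => exp (I * z)) (cousinM a b) (cousinN a b) where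
  holo _ _ := by fun_prop
  hne _ _ := exp_ne_zero _
  cM := (contDiff_cousinM a b).contDiffOn
  cN := (contDiff_cousinN a b).contDiffOn
  pde z _ := rzzb_cousinM_eq a b z
  nz z hz := rz_cousinM_sub_ne_zero a b z (hΩ z hz)

end Cousins

/-- The family of Weierstrass data of the second kind interpolating between
a catenoid cousin in ℍ³ and a hyperbolic catenoid cousin in 𝕊³₁. -/
theorem stmt_14 (θ : ℝ)
    (h : ℂ → ℂ) (hh : h = fun z => Complex.exp (Complex.I * z))
    (M : ℂ → ℝ)
    (hM : M = fun z => Real.cos θ * Real.sinh z.re * Real.sin z.re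
      - Real.sin θ * Real.cos z.re * Real.cos z.im)
    (N : ℂ → ℝ)
    (hN : N = fun z => Real.exp z.im *
      (Real.cos θ * Real.cosh z.re + Real.sin θ * Real.sin z.im)) :
    (∀ z : ℂ,
      pduu (fun w => (M w : ℂ)) z + pdvv (fun w => (M w : ℂ)) z
        = ((Real.exp (-z.im) * Real.cos z.re : ℝ) : ℂ) *
            (pduu (fun w => (N w : ℂ)) z + pdvv (fun w => (N w : ℂ)) z)) ∧
    (∀ z : ℂ, rzzb M z = (((h z).re : ℂ)) * rzzb N z) ∧
    (∀ z : ℂ, rz M z - (((h z).re : ℂ)) * rz N z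
      = (Complex.I / 2) * Complex.exp (-(Complex.I * z.re)) *
          ((Real.cos θ * Real.cosh z.re + Real.sin θ * Real.cos z.im : ℝ) : ℂ)) ∧
    (∀ z : ℂ, Real.cos θ * Real.cosh z.re + Real.sin θ * Real.cos z.im ≠ 0 →
      rz M z - (((h z).re : ℂ)) * rz N z ≠ 0) ∧
    (∀ Ω : Set ℂ, IsOpen Ω →
      (∀ z ∈ Ω, Real.cos θ * Real.cosh z.re + Real.sin θ * Real.cos z.im ≠ 0) →
      IsWD2 Ω h M N) := by
  subst hh
  obtain rfl : M = cousinM (Real.cos θ) (Real.sin θ) := hM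
  obtain rfl : N = cousinN (Real.cos θ) (Real.sin θ) := hN
  exact ⟨laplacian_cousinM_eq _ _, rzzb_cousinM_eq _ _, rz_cousinM_sub _ _,
    rz_cousinM_sub_ne_zero _ _, fun Ω _ hΩ => isWD2_cousin _ _ hΩ⟩
end
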